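/- arXiv:2410.09833 — 11 statements merged into one kernel-verified Lean document; each statement's English description precedes it below -/
import Mathlib

section
/- Let G be a graph on an even number n of vertices. Then every odd-indexed coefficient of the characteristic polynomial of its adjacency matrix is even; consequently, over F_2, φ(x) is a perfect square: φ(x) ≡ (x^{n/2} + c_2 x^{n/2-1} + ... + c_{n-2} x + c_n)^2 (mod 2). -/
open Matrix Polynomial

/-!
Reduction mod 2 forgets signs, so a symmetric integer matrix with zero diagonal, such as an
adjacency matrix, is congruent mod 2 to a skew-symmetric one `B`. Since `Bᵀ = -B`, the polynomial
`χ_B` equals `χ_{-B}(x) = (-1)ⁿ χ_B(-x)`, so its coefficients of index `k` with `n + k` odd vanish.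
Hence mod 2 only even powers of `x` survive when `n` is even, and over `𝔽₂` a polynomial in `x²`
is the square of its contraction, because the Frobenius map fixes the coefficients.
-/

namespace Matrix

theorem exists_transpose_eq_neg_map_eq {n R S : Type*} [LinearOrder n] [Ring R] [Ring S]
    [CharP S 2] (f : R →+* S) {A : Matrix n n R} (hA : A.IsSymm) (hdiag : ∀ i, A i i = 0) :
    ∃ B : Matrix n n R, Bᵀ = -B ∧ B.map f = A.map f := by
  refine ⟨of fun i j => if i < j then A i j else -A i j, ?_, ?_⟩
  · ext i j
    rcases lt_trichotomy i j with h | rfl | h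
    · simp [h, h.not_gt, hA.apply i j]
    · simp [hdiag]
    · simp [h, h.not_gt, hA.apply i j]
  · ext i j
    by_cases h : i < j <;> simp [h, CharTwo.neg_eq]

variable {n : Type*} [Fintype n] [DecidableEq n]

section CommRing

variable {R : Type*} [CommRing R]

theorem charpoly_neg (M : Matrix n n R) :
    (-M).charpoly = (-1) ^ Fintype.card n * M.charpoly.comp (-X) := by
  have h : charmatrix (-M) = -(compRingHom (-X)).mapMatrix (charmatrix M) := by
    refine Matrix.ext fun i j => ?_
    by_cases hij : i = j
    · subst hij
      simp [charmatrix_apply_eq]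
      ring
    · simp [charmatrix_apply_ne _ _ _ hij]
  rw [charpoly, h, det_neg, ← RingHom.map_det]
  rfl

theorem coeff_charpoly_neg (M : Matrix n n R) (k : ℕ) :
    (-M).charpoly.coeff k = (-1) ^ (Fintype.card n + k) * M.charpoly.coeff k := by
  rw [charpoly_neg, show (-X : R[X]) = C (-1) * X by simp,
    show ((-1) ^ Fintype.card n : R[X]) = C ((-1) ^ Fintype.card n) by simp, coeff_C_mul,
    comp_C_mul_X_coeff]
  ring

theorem coeff_charpoly_eq_zero_of_transpose_eq_neg [IsAddTorsionFree R] {M : Matrix n n R}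
    (hM : Mᵀ = -M) {k : ℕ} (hk : Odd (Fintype.card n + k)) : M.charpoly.coeff k = 0 := by
  have h := coeff_charpoly_neg M k
  rw [← hM, charpoly_transpose, hk.neg_one_pow, neg_one_mul] at h
  exact self_eq_neg.mp h

end CommRing

theorem even_coeff_charpoly_of_isSymm {A : Matrix n n ℤ} (hA : A.IsSymm)
    (hdiag : ∀ i, A i i = 0) {k : ℕ} (hk : Odd (Fintype.card n + k)) :
    Even (A.charpoly.coeff k) := by
  set f := Int.castRingHom (ZMod 2)
  obtain ⟨B, hB, hBA⟩ : ∃ B : Matrix n n ℤ, Bᵀ = -B ∧ B.map f = A.map f := by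
    let : LinearOrder n := LinearOrder.lift' _ (Fintype.equivFin n).injective
    exact exists_transpose_eq_neg_map_eq f hA hdiag
  rw [← ZMod.intCast_eq_zero_iff_even]
  calc (A.charpoly.coeff k : ZMod 2) = (A.map f).charpoly.coeff k := by
        rw [charpoly_map, coeff_map, eq_intCast]
    _ = (B.charpoly.coeff k : ZMod 2) := by rw [← hBA, charpoly_map, coeff_map, eq_intCast]
    _ = 0 := by rw [coeff_charpoly_eq_zero_of_transpose_eq_neg hB hk, Int.cast_zero]

end Matrix

namespace Polynomial

theorem natDegree_contract_le {R : Type*} [CommSemiring R] {p : ℕ} (hp : p ≠ 0) (f : R[X]) :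
    (contract p f).natDegree ≤ f.natDegree / p := by
  refine natDegree_le_iff_coeff_eq_zero.mpr fun k hk => ?_
  rw [coeff_contract hp]
  exact coeff_eq_zero_of_natDegree_lt ((Nat.div_lt_iff_lt_mul (Nat.pos_of_ne_zero hp)).mp hk)

theorem eq_contract_pow_of_coeff_eq_zero {ℓ : ℕ} [Fact ℓ.Prime] {f : (ZMod ℓ)[X]}
    (hf : ∀ k, ¬ℓ ∣ k → f.coeff k = 0) : f = contract ℓ f ^ ℓ := by
  have hℓ : ℓ ≠ 0 := (Fact.out : ℓ.Prime).ne_zero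
  rw [← ZMod.expand_card]
  ext k
  rw [coeff_expand (Nat.pos_of_ne_zero hℓ), coeff_contract hℓ]
  split_ifs with h
  · rw [Nat.div_mul_cancel h]
  · exact hf k h

end Polynomial

theorem charpoly_is_square_mod_two_of_even_order_general {n : ℕ} (hn : Even n)
    (G : SimpleGraph (Fin n)) [DecidableRel G.Adj] :
    (∀ i, Odd i → i ≤ n → Even ((G.adjMatrix ℤ).charpoly.coeff (n - i))) ∧
    ((G.adjMatrix ℤ).charpoly.map (Int.castRingHom (ZMod 2)) =
      (∑ j ∈ Finset.range (n / 2 + 1),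
        C (((G.adjMatrix ℤ).charpoly.coeff (n - 2 * j) : ZMod 2)) * X ^ (n / 2 - j)) ^ 2) := by
  set φ := (G.adjMatrix ℤ).charpoly
  have hφ : ∀ k, Odd (n + k) → Even (φ.coeff k) := fun k hk =>
    even_coeff_charpoly_of_isSymm G.isSymm_adjMatrix (by simp) (by simpa using hk)
  refine ⟨fun i hi hin => hφ _ ?_, ?_⟩
  · obtain ⟨a, rfl⟩ := hn
    obtain ⟨b, rfl⟩ := hi
    exact ⟨2 * a - b - 1, by omega⟩
  set ψ := φ.map (Int.castRingHom (ZMod 2))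
  have hψ : ∀ k, ¬2 ∣ k → ψ.coeff k = 0 := fun k hk => by
    rw [coeff_map, eq_intCast, ZMod.intCast_eq_zero_iff_even]
    exact hφ k (hn.add_odd (Nat.not_even_iff_odd.mp (by rwa [even_iff_two_dvd])))
  have hdeg : (contract 2 ψ).natDegree < n / 2 + 1 := by
    grw [natDegree_contract_le two_ne_zero, natDegree_map_le, charpoly_natDegree_eq_dim,
      Fintype.card_fin]
    omega
  refine (eq_contract_pow_of_coeff_eq_zero hψ).trans ?_
  rw [as_sum_range_C_mul_X_pow' _ hdeg, ← Finset.sum_range_reflect]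
  refine congrArg (· ^ 2) (Finset.sum_congr rfl fun j _ => ?_)
  have hn₂ := Nat.div_two_mul_two_of_even hn
  rw [coeff_contract two_ne_zero, coeff_map, eq_intCast, Nat.add_sub_cancel,
    show (n / 2 - j) * 2 = n - 2 * j by omega]

/-- For a graph on an even number `n` of vertices, every odd-indexed coefficient `cᵢ` of the
characteristic polynomial `φ(x) = xⁿ + c₁xⁿ⁻¹ + ⋯ + cₙ` of its adjacency matrix is even, and
consequently over `F₂`, `φ ≡ (x^{n/2} + c₂x^{n/2-1} + ⋯ + c_{n-2}x + c_n)² (mod 2)`. -/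
theorem charpoly_is_square_mod_two_of_even_order {n : ℕ} (hn : Even n) (hpos : 0 < n)
    (G : SimpleGraph (Fin n)) [DecidableRel G.Adj] :
    (∀ i, Odd i → i ≤ n → Even ((G.adjMatrix ℤ).charpoly.coeff (n - i))) ∧
    ((G.adjMatrix ℤ).charpoly.map (Int.castRingHom (ZMod 2)) =
      (∑ j ∈ Finset.range (n / 2 + 1),
        C (((G.adjMatrix ℤ).charpoly.coeff (n - 2 * j) : ZMod 2)) * X ^ (n / 2 - j)) ^ 2) :=
  charpoly_is_square_mod_two_of_even_order_general hn G
end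

section
/- Let G be a graph on an odd number n of vertices with characteristic polynomial φ(x) = x^n + c_1 x^{n-1} + ... + c_n. Then over F_2, x·φ(x) is a perfect square: x φ(x) ≡ (x^{(n+1)/2} + c_2 x^{(n-1)/2} + ... + c_{n-3} x^2 + c_{n-1} x)^2 (mod 2). -/
open Matrix Polynomial

private lemma sign_cast_char_two {n : ℕ} (σ : Equiv.Perm (Fin n)) :
    ((Equiv.Perm.sign σ : ℤ) : (ZMod 2)[X]) = 1 := by
  rcases Int.units_eq_one_or (Equiv.Perm.sign σ) with h | h <;> rw [h] <;>
    simp [CharTwo.neg_eq]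

/-- Over `F₂`, even-index coefficients of the characteristic polynomial of the adjacency
matrix of a graph on an odd number of vertices vanish. -/
private lemma coeff_charpoly_even {n : ℕ} (hn : Odd n) (G : SimpleGraph (Fin n))
    [DecidableRel G.Adj] {k : ℕ} (hk : Even k) :
    (G.adjMatrix (ZMod 2)).charpoly.coeff k = 0 := by
  classical
  set B := G.adjMatrix (ZMod 2) with hB
  have hsymm : ∀ i j, charmatrix B i j = charmatrix B j i := by
    intro i j
    rcases eq_or_ne i j with rfl | h
    · rfl
    · rw [charmatrix_apply_ne _ _ _ h, charmatrix_apply_ne _ _ _ h.symm]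
      congr 1
      simp [hB, SimpleGraph.adjMatrix_apply, G.adj_comm i j]
  have hdet : B.charpoly = ∑ σ : Equiv.Perm (Fin n), ∏ i, charmatrix B (σ i) i := by
    rw [Matrix.charpoly, Matrix.det_apply']
    refine Finset.sum_congr rfl fun σ _ => ?_
    rw [sign_cast_char_two, one_mul]
  have hco : B.charpoly.coeff k
      = ∑ σ : Equiv.Perm (Fin n), (∏ i, charmatrix B (σ i) i).coeff k := by
    rw [hdet, Polynomial.finset_sum_coeff]
  have hFsymm : ∀ σ : Equiv.Perm (Fin n),
      (∏ i, charmatrix B (σ⁻¹ i) i).coeff k = (∏ i, charmatrix B (σ i) i).coeff k := by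
    intro σ
    congr 1
    calc ∏ i, charmatrix B (σ⁻¹ i) i
        = ∏ i, charmatrix B (σ⁻¹ (σ i)) (σ i) :=
          (Equiv.prod_comp σ (fun i => charmatrix B (σ⁻¹ i) i)).symm
      _ = ∏ i, charmatrix B i (σ i) := by simp
      _ = ∏ i, charmatrix B (σ i) i := by
          exact Finset.prod_congr rfl fun i _ => hsymm i (σ i)
  rw [hco, ← Finset.sum_filter_add_sum_filter_not Finset.univ (fun σ => σ⁻¹ = σ)]
  have h2 : ∑ σ ∈ Finset.univ.filter (fun σ : Equiv.Perm (Fin n) => ¬ σ⁻¹ = σ),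
      (∏ i, charmatrix B (σ i) i).coeff k = 0 := by
    refine Finset.sum_involution (fun σ _ => σ⁻¹) ?_ ?_ ?_ ?_
    · intro σ _
      rw [hFsymm σ, CharTwo.add_self_eq_zero]
    · intro σ hσ _
      exact (Finset.mem_filter.mp hσ).2
    · intro σ hσ
      simp only [Finset.mem_filter, Finset.mem_univ, true_and] at hσ ⊢
      rw [inv_inv]
      exact fun h => hσ h.symm
    · intro σ _
      exact inv_inv σ
  have h1 : ∑ σ ∈ Finset.univ.filter (fun σ : Equiv.Perm (Fin n) => σ⁻¹ = σ),
      (∏ i, charmatrix B (σ i) i).coeff k = 0 := by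
    refine Finset.sum_eq_zero fun σ hσ => ?_
    have hinv : σ⁻¹ = σ := (Finset.mem_filter.mp hσ).2
    have hσ2 : σ ^ 2 ^ 1 = 1 := by
      have hmm : σ * σ = 1 := by
        nth_rewrite 1 [← hinv]
        exact inv_mul_cancel σ
      rw [pow_one, sq]
      exact hmm
    have hfix : Odd σ.supportᶜ.card := by
      have hmod := Equiv.Perm.card_compl_support_modEq hσ2
      rw [Fintype.card_fin] at hmod
      obtain ⟨t, ht⟩ := hn
      rw [Nat.ModEq] at hmod
      rw [Nat.odd_iff]
      omega
    have hprod : (∏ i, charmatrix B (σ i) i)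
        = C (∏ i ∈ σ.support, (- B (σ i) i)) * X ^ σ.supportᶜ.card := by
      rw [← Finset.prod_mul_prod_compl σ.support]
      congr 1
      · rw [map_prod]
        refine Finset.prod_congr rfl fun i hi => ?_
        rw [charmatrix_apply_ne _ _ _ (Equiv.Perm.mem_support.mp hi), map_neg]
      · have hX : ∀ i ∈ σ.supportᶜ, charmatrix B (σ i) i = X := by
          intro i hi
          have hfixi : σ i = i := by
            have := Finset.mem_compl.mp hi
            rwa [Equiv.Perm.notMem_support] at this
          rw [hfixi, charmatrix_apply_eq]
          simp [hB, SimpleGraph.adjMatrix_apply]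
        rw [Finset.prod_congr rfl hX, Finset.prod_const]
    rw [hprod, Polynomial.coeff_C_mul, Polynomial.coeff_X_pow]
    have hne : σ.supportᶜ.card ≠ k := by
      intro h
      rw [h] at hfix
      exact (Nat.not_odd_iff_even.mpr hk) hfix
    simp [hne, Ne.symm hne]
  rw [h1, h2, add_zero]

/-- For a graph on an odd number `n` of vertices with characteristic polynomial
`φ(x) = xⁿ + c₁xⁿ⁻¹ + ⋯ + cₙ`, over `F₂` one has
`x·φ(x) ≡ (x^{(n+1)/2} + c₂x^{(n-1)/2} + ⋯ + c_{n-3}x² + c_{n-1}x)² (mod 2)`. -/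
theorem x_mul_charpoly_is_square_mod_two_of_odd_order {n : ℕ} (hn : Odd n)
    (G : SimpleGraph (Fin n)) [DecidableRel G.Adj] :
    X * ((G.adjMatrix ℤ).charpoly.map (Int.castRingHom (ZMod 2))) =
      (∑ j ∈ Finset.range ((n - 1) / 2 + 1),
        C (((G.adjMatrix ℤ).charpoly.coeff (n - 2 * j) : ZMod 2)) * X ^ ((n + 1) / 2 - j)) ^ 2 := by
  classical
  obtain ⟨t, ht⟩ := hn
  have hn' : Odd n := ⟨t, ht⟩
  have hcast : (G.adjMatrix ℤ).map (Int.castRingHom (ZMod 2)) = G.adjMatrix (ZMod 2) := by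
    ext i j
    simp [SimpleGraph.adjMatrix_apply, Matrix.map_apply, apply_ite]
  have hmap : (G.adjMatrix ℤ).charpoly.map (Int.castRingHom (ZMod 2))
      = (G.adjMatrix (ZMod 2)).charpoly := by
    rw [← Matrix.charpoly_map, hcast]
  set φ := (G.adjMatrix (ZMod 2)).charpoly with hφ
  have hcoeff : ∀ m, (((G.adjMatrix ℤ).charpoly.coeff m : ℤ) : ZMod 2) = φ.coeff m := by
    intro m
    rw [← hmap, Polynomial.coeff_map]
    rfl
  have hdeg : φ.natDegree = n := by
    rw [hφ, Matrix.charpoly_natDegree_eq_dim, Fintype.card_fin]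
  have h12 : (n - 1) / 2 = t := by omega
  have h22 : (n + 1) / 2 = t + 1 := by omega
  have hrep : φ = ∑ j ∈ Finset.range (t + 1), C (φ.coeff (n - 2 * j)) * X ^ (n - 2 * j) := by
    ext k
    rw [Polynomial.finset_sum_coeff]
    simp_rw [Polynomial.coeff_C_mul, Polynomial.coeff_X_pow]
    rcases Nat.even_or_odd k with hk | hk
    · rw [coeff_charpoly_even hn' G hk]
      symm
      refine Finset.sum_eq_zero fun j hj => ?_
      rw [Finset.mem_range] at hj
      obtain ⟨s, hs⟩ := hk
      have : n - 2 * j ≠ k := by omega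
      simp [this, Ne.symm this]
    · obtain ⟨r, hr⟩ := hk
      by_cases hkn : k ≤ n
      · rw [Finset.sum_eq_single ((n - k) / 2)]
        · have he : n - 2 * ((n - k) / 2) = k := by omega
          rw [he]
          simp
        · intro j hj hne
          rw [Finset.mem_range] at hj
          have : n - 2 * j ≠ k := by omega
          simp [this, Ne.symm this]
        · intro habs
          exfalso
          exact habs (Finset.mem_range.mpr (by omega))
      · rw [Polynomial.coeff_eq_zero_of_natDegree_lt (by omega)]
        symm
        refine Finset.sum_eq_zero fun j hj => ?_
        rw [Finset.mem_range] at hj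
        have : n - 2 * j ≠ k := by omega
        simp [this, Ne.symm this]
  rw [hmap, h12, h22]
  simp_rw [hcoeff]
  rw [CharTwo.sum_sq]
  conv_lhs => rw [hrep]
  rw [Finset.mul_sum]
  refine Finset.sum_congr rfl fun j hj => ?_
  rw [Finset.mem_range] at hj
  rw [mul_pow, ← map_pow, ZMod.pow_card, ← pow_mul]
  have he1 : (t + 1 - j) * 2 = (n - 2 * j) + 1 := by omega
  rw [he1, pow_succ]
  ring
end

section
/- For any simple graph, every odd-indexed coefficient c_i (i odd) of the characteristic polynomial of its adjacency matrix is even. -/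
open Matrix Polynomial Finset

/-- For an involution, the set of non-fixed points has even cardinality. -/
lemma even_card_nonfixed {n : ℕ} (σ : Equiv.Perm (Fin n)) (hσ : ∀ i, σ (σ i) = i) :
    Even (Finset.univ.filter (fun i => σ i ≠ i)).card := by
  classical
  set s := Finset.univ.filter (fun i => σ i ≠ i) with hs
  set u := s.filter (fun i => i < σ i) with hu
  set v := s.filter (fun i => σ i < i) with hv
  have hsuv : s = u ∪ v := by
    ext i
    simp only [hu, hv, hs, Finset.mem_union, Finset.mem_filter, Finset.mem_univ, true_and]
    constructor
    · intro h
      rcases lt_or_gt_of_ne h with h' | h'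
      · exact Or.inr ⟨h, h'⟩
      · exact Or.inl ⟨h, h'⟩
    · rintro (⟨h, _⟩ | ⟨h, _⟩) <;> exact h
  have hdisj : Disjoint u v := by
    rw [Finset.disjoint_left]
    intro i hiu hiv
    simp only [hu, hv, Finset.mem_filter] at hiu hiv
    exact absurd (hiu.2.trans hiv.2) (lt_irrefl i)
  have hcard : v.card = u.card := by
    apply Finset.card_bij (fun i _ => σ i)
    · intro i hi
      simp only [hv, hu, hs, Finset.mem_filter, Finset.mem_univ, true_and] at hi ⊢
      refine ⟨?_, ?_⟩
      · rw [hσ]; exact fun h => hi.1 h.symm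
      · rw [hσ]; exact hi.2
    · intro a _ b _ h
      exact σ.injective h
    · intro j hj
      simp only [hu, hs, Finset.mem_filter, Finset.mem_univ, true_and] at hj
      refine ⟨σ j, ?_, (hσ j)⟩
      simp only [hv, hs, Finset.mem_filter, Finset.mem_univ, true_and, hσ]
      exact ⟨fun h => hj.1 h.symm, hj.2⟩
  rw [hsuv, Finset.card_union_of_disjoint hdisj, hcard]
  exact ⟨u.card, rfl⟩

lemma zmod2_charpoly_coeff_eq_zero {n : ℕ} (G : SimpleGraph (Fin n))
    [DecidableRel G.Adj] {k : ℕ} (hk : k % 2 ≠ n % 2) :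
    (G.adjMatrix (ZMod 2)).charpoly.coeff k = 0 := by
  classical
  set B := G.adjMatrix (ZMod 2) with hB
  have hBsymm : ∀ i j, B i j = B j i := by
    intro i j
    simp [hB, SimpleGraph.adjMatrix_apply, SimpleGraph.adj_comm]
  have hcsymm : ∀ i j, charmatrix B i j = charmatrix B j i := by
    intro i j
    by_cases h : i = j
    · subst h; rfl
    · rw [charmatrix_apply_ne _ _ _ h, charmatrix_apply_ne _ _ _ (Ne.symm h), hBsymm]
  rw [Matrix.charpoly, Matrix.det_apply, Polynomial.finset_sum_coeff]
  apply Finset.sum_ninvolution (fun σ => σ⁻¹)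
  · -- f σ + f σ⁻¹ = 0
    intro σ
    have hprod : (∏ i, charmatrix B (σ⁻¹ i) i) = ∏ i, charmatrix B (σ i) i := by
      calc (∏ i, charmatrix B (σ⁻¹ i) i) = ∏ i, charmatrix B (σ⁻¹ (σ i)) (σ i) :=
            (Equiv.prod_comp σ _).symm
        _ = ∏ i, charmatrix B i (σ i) := by simp
        _ = ∏ i, charmatrix B (σ i) i := by
            exact Finset.prod_congr rfl (fun i _ => hcsymm i (σ i))
    rw [Equiv.Perm.sign_inv, hprod]
    exact CharTwo.add_self_eq_zero _
  · -- involutions give zero terms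
    intro σ hne
    by_contra hcon
    have h : σ⁻¹ = σ := hcon
    apply hne
    have hσ : ∀ i, σ (σ i) = i := by
      intro i
      have := congrArg (fun τ : Equiv.Perm (Fin n) => τ (σ i)) h
      simpa using this.symm
    -- compute the product
    set t := Finset.univ.filter (fun i => σ i = i) with ht
    have hsplit : (∏ i, charmatrix B (σ i) i)
        = (∏ i ∈ t, charmatrix B (σ i) i) * ∏ i ∈ tᶜ, charmatrix B (σ i) i :=
      (Finset.prod_mul_prod_compl t _).symm
    have h1 : (∏ i ∈ t, charmatrix B (σ i) i) = X ^ t.card := by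
      rw [← Finset.prod_const]
      apply Finset.prod_congr rfl
      intro i hi
      rw [ht] at hi
      simp only [Finset.mem_filter] at hi
      rw [hi.2, charmatrix_apply_eq]
      simp [hB]
    have h2 : (∏ i ∈ tᶜ, charmatrix B (σ i) i) = C (∏ i ∈ tᶜ, -(B (σ i) i)) := by
      rw [map_prod]
      apply Finset.prod_congr rfl
      intro i hi
      rw [ht] at hi
      simp only [Finset.compl_filter, Finset.mem_filter] at hi
      rw [charmatrix_apply_ne _ _ _ hi.2, map_neg]
    have hkt : k ≠ t.card := by
      have hcompl : Even tᶜ.card := by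
        have : tᶜ = Finset.univ.filter (fun i => σ i ≠ i) := by
          rw [ht, Finset.compl_filter]
        rw [this]
        exact even_card_nonfixed σ hσ
      have hsum : t.card + tᶜ.card = n := by
        rw [Finset.card_add_card_compl]
        simp
      intro hkm
      obtain ⟨m, hm⟩ := hcompl
      omega
    rw [hsplit, h1, h2, Polynomial.coeff_smul, mul_comm, Polynomial.coeff_C_mul,
      Polynomial.coeff_X_pow, if_neg hkt, mul_zero, smul_zero]
  · intro σ; exact Finset.mem_univ _
  · intro σ; exact inv_inv σ

/-- For any simple graph, every odd-indexed coefficient `cᵢ` (`i` odd, `1 ≤ i ≤ n`) of the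
characteristic polynomial `xⁿ + c₁xⁿ⁻¹ + ⋯ + cₙ` of its adjacency matrix is even. -/
theorem odd_indexed_charpoly_coeff_even {n : ℕ} (G : SimpleGraph (Fin n))
    [DecidableRel G.Adj] :
    ∀ i, Odd i → i ≤ n → Even ((G.adjMatrix ℤ).charpoly.coeff (n - i)) := by
  intro i hi hin
  have hmap : (G.adjMatrix ℤ).map ⇑(Int.castRingHom (ZMod 2)) = G.adjMatrix (ZMod 2) := by
    ext a b
    simp [SimpleGraph.adjMatrix_apply, Matrix.map_apply, apply_ite (Int.cast : ℤ → ZMod 2)]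
  have h1 := Matrix.charpoly_map (G.adjMatrix ℤ) (Int.castRingHom (ZMod 2))
  rw [hmap] at h1
  have hcast : ((((G.adjMatrix ℤ).charpoly.coeff (n - i)) : ℤ) : ZMod 2)
      = (G.adjMatrix (ZMod 2)).charpoly.coeff (n - i) := by
    rw [h1, Polynomial.coeff_map]
    rfl
  have hpar : (n - i) % 2 ≠ n % 2 := by
    rw [Nat.odd_iff] at hi
    omega
  have h0 : (((G.adjMatrix ℤ).charpoly.coeff (n - i) : ℤ) : ZMod 2) = 0 := by
    rw [hcast]
    exact zmod2_charpoly_coeff_eq_zero G hpar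
  rw [ZMod.intCast_zmod_eq_zero_iff_dvd] at h0
  obtain ⟨m, hm⟩ := h0
  exact ⟨m, by push_cast at hm; omega⟩
end

section
/- Let A be a symmetric matrix over a field F of characteristic 2 with A e = 0, let λ ≠ 0 be an eigenvalue of A over the algebraic closure, and let α_1, ..., α_ℓ be a Jordan chain for λ (i.e., A α_1 = λ α_1 and A α_{k+1} = λ α_{k+1} + α_k for 1 ≤ k < ℓ). Then e^T α_k = 0 for all k. -/
open Matrix

/-- Let `A` be a symmetric matrix over a field of characteristic 2 with `A e = 0`, let
`λ ≠ 0`, and let `α 0, …, α (ℓ-1)` be a Jordan chain for `λ`. Then `eᵀ (α k) = 0` for all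
`k < ℓ`. -/
theorem jordan_chain_sum_zero_of_ne_zero_eigenvalue {F : Type*} [Field F] [CharP F 2]
    {n : ℕ} (A : Matrix (Fin n) (Fin n) F) (hsymm : A.IsSymm)
    (he : A.mulVec (fun _ => 1) = 0)
    (lam : F) (hlam : lam ≠ 0) (ℓ : ℕ) (hℓ : 0 < ℓ) (α : ℕ → Fin n → F)
    (h1 : A.mulVec (α 0) = lam • α 0)
    (hchain : ∀ k, k + 1 < ℓ → A.mulVec (α (k + 1)) = lam • α (k + 1) + α k) :
    ∀ k < ℓ, (fun _ => (1 : F)) ⬝ᵥ α k = 0 := by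
  have key : ∀ v : Fin n → F, (fun _ => (1 : F)) ⬝ᵥ A.mulVec v = 0 := by
    intro v
    rw [dotProduct_mulVec, ← Matrix.mulVec_transpose, hsymm.eq, he, zero_dotProduct]
  intro k
  induction k with
  | zero =>
    intro _
    have := key (α 0)
    rw [h1, dotProduct_smul] at this
    exact (mul_eq_zero.mp this).resolve_left hlam
  | succ k ih =>
    intro hk
    have hkℓ : k < ℓ := Nat.lt_of_succ_lt hk
    have := key (α (k + 1))
    rw [hchain k hk, dotProduct_add, dotProduct_smul, ih hkℓ, add_zero] at this
    exact (mul_eq_zero.mp this).resolve_left hlam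
end

section
/- Let A be a symmetric matrix over a field of characteristic 2 with zero diagonal and A e = 0, and let α_1, ..., α_ℓ be a Jordan chain for a nonzero eigenvalue λ. Then the Gram matrix (α_j^T α_k)_{j,k} of the chain is identically zero. -/
open Matrix

lemma quad_vanish_char2 {F : Type*} [Field F] [CharP F 2] {n : ℕ}
    (M : Matrix (Fin n) (Fin n) F) (hs : M.IsSymm) (hd : ∀ i, M i i = 0)
    (x : Fin n → F) : x ⬝ᵥ M.mulVec x = 0 := by
  classical
  have h2 : (2 : F) = 0 := by exact_mod_cast CharP.cast_eq_zero F 2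
  have hrw : x ⬝ᵥ M.mulVec x = ∑ p : Fin n × Fin n, x p.1 * M p.1 p.2 * x p.2 := by
    simp [dotProduct, mulVec, Finset.mul_sum, Fintype.sum_prod_type, mul_assoc]
  rw [hrw]
  refine Finset.sum_ninvolution (fun p => (p.2, p.1)) ?_ ?_ (by simp) (by simp)
  · intro p
    have hsym : M p.2 p.1 = M p.1 p.2 := hs.apply p.1 p.2
    have : x p.1 * M p.1 p.2 * x p.2 + x p.2 * M p.2 p.1 * x p.1
        = 2 * (x p.1 * M p.1 p.2 * x p.2) := by rw [hsym]; ring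
    rw [this, h2, zero_mul]
  · intro p hp
    intro h
    apply hp
    have h1 : p.2 = p.1 := congrArg Prod.fst h
    rw [h1, hd, mul_zero, zero_mul]

/-- Let `A` be a symmetric matrix over a field of characteristic 2 with zero diagonal and
`A e = 0`, and let `α 0, …, α (ℓ-1)` be a Jordan chain for a nonzero eigenvalue `λ`. Then the
Gram matrix `(αⱼᵀ αₖ)` of the chain vanishes identically. -/
theorem jordan_chain_gram_zero_of_ne_zero_eigenvalue {F : Type*} [Field F] [CharP F 2]
    {n : ℕ} (A : Matrix (Fin n) (Fin n) F) (hsymm : A.IsSymm)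
    (hdiag : ∀ i, A i i = 0) (he : A.mulVec (fun _ => 1) = 0)
    (lam : F) (hlam : lam ≠ 0) (ℓ : ℕ) (α : ℕ → Fin n → F)
    (h1 : A.mulVec (α 0) = lam • α 0)
    (hchain : ∀ k, k + 1 < ℓ → A.mulVec (α (k + 1)) = lam • α (k + 1) + α k) :
    ∀ j < ℓ, ∀ k < ℓ, α j ⬝ᵥ α k = 0 := by
  classical
  have h2 : (2 : F) = 0 := by exact_mod_cast CharP.cast_eq_zero F 2
  -- quadratic form of A vanishes
  have quadA : ∀ x : Fin n → F, x ⬝ᵥ A.mulVec x = 0 :=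
    quad_vanish_char2 A hsymm hdiag
  -- A * A is symmetric with zero diagonal (using A e = 0 and char 2)
  have hAA_symm : (A * A).IsSymm := by
    unfold Matrix.IsSymm
    rw [Matrix.transpose_mul, hsymm]
  have hAA_diag : ∀ i, (A * A) i i = 0 := by
    intro i
    have : (A * A) i i = ∑ j, A i j * A j i := by simp [Matrix.mul_apply]
    rw [this]
    have hsy : ∀ j, A j i = A i j := fun j => hsymm.apply i j
    calc ∑ j, A i j * A j i = ∑ j, (A i j) ^ 2 := by
          refine Finset.sum_congr rfl fun j _ => ?_
          rw [hsy j, sq]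
      _ = (∑ j, A i j) ^ 2 := by
          rw [← sum_pow_char 2]
      _ = 0 := by
          have : (∑ j, A i j) = A.mulVec (fun _ => 1) i := by simp [mulVec, dotProduct]
          rw [this, he]; simp
  have quadAA : ∀ x : Fin n → F, x ⬝ᵥ (A * A).mulVec x = 0 :=
    quad_vanish_char2 (A * A) hAA_symm hAA_diag
  -- symmetry of the bilinear form via A
  have hbil : ∀ x y : Fin n → F, A.mulVec x ⬝ᵥ y = x ⬝ᵥ A.mulVec y := by
    intro x y
    rw [dotProduct_comm, Matrix.dotProduct_mulVec, ← Matrix.mulVec_transpose,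
      hsymm.eq, dotProduct_comm]
  -- hence (Ax) ⬝ (Ax) = 0
  have quadsq : ∀ x : Fin n → F, A.mulVec x ⬝ᵥ A.mulVec x = 0 := by
    intro x
    rw [hbil, Matrix.mulVec_mulVec, quadAA]
  -- char-2 cancellation helper
  have hcancel : ∀ a b c : F, a + b = a + c → b = c := fun a b c h => by
    have := congrArg (fun t => t - a) h; simpa using this
  -- L1 : antidiagonal shift
  have L1 : ∀ j k, j + 1 < ℓ → k + 1 < ℓ →
      α j ⬝ᵥ α (k + 1) = α (j + 1) ⬝ᵥ α k := by
    intro j k hj hk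
    have h := hbil (α (j+1)) (α (k+1))
    rw [hchain j hj, hchain k hk] at h
    simp only [add_dotProduct, dotProduct_add, smul_dotProduct, dotProduct_smul] at h
    exact hcancel _ _ _ h
  -- L2 : diagonal vanishes
  have L2 : ∀ t, t < ℓ → α t ⬝ᵥ α t = 0 := by
    intro t
    induction t with
    | zero =>
      intro _
      have h := quadA (α 0)
      rw [h1] at h
      simp only [dotProduct_smul, smul_eq_mul] at h
      exact (mul_eq_zero.mp h).resolve_left hlam
    | succ t ih =>
      intro ht
      have h := quadsq (α (t + 1))
      rw [hchain t ht] at h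
      simp only [add_dotProduct, dotProduct_add, smul_dotProduct, dotProduct_smul,
        smul_eq_mul] at h
      have hd0 : α t ⬝ᵥ α t = 0 := ih (by omega)
      have hcomm : α t ⬝ᵥ α (t+1) = α (t+1) ⬝ᵥ α t := dotProduct_comm _ _
      rw [hd0, hcomm] at h
      have h2' : lam * (lam * (α (t+1) ⬝ᵥ α (t+1)))
          + 2 * (lam * (α (t+1) ⬝ᵥ α t)) = 0 := by
        rw [← h]; ring
      rw [h2, zero_mul, add_zero] at h2'
      have := mul_eq_zero.mp h2'
      rcases this with h' | h'
      · exact absurd h' hlam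
      · exact (mul_eq_zero.mp h').resolve_left hlam
  -- L3 : off-by-one diagonal vanishes
  have L3 : ∀ t, t + 1 < ℓ → α t ⬝ᵥ α (t + 1) = 0 := by
    intro t ht
    have h := quadA (α (t + 1))
    rw [hchain t ht] at h
    simp only [dotProduct_add, dotProduct_smul, smul_eq_mul] at h
    rw [dotProduct_comm (α (t+1)) (α t)] at h
    rw [L2 (t+1) ht] at h
    rw [mul_zero, zero_add] at h
    exact h
  -- propagate along antidiagonals
  have key : ∀ d, ∀ j, j + d < ℓ → α j ⬝ᵥ α (j + d) = 0 := by
    intro d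
    induction d using Nat.strong_induction_on with
    | _ d ih =>
      match d with
      | 0 => exact fun j h => L2 j (by omega)
      | 1 => exact fun j h => L3 j h
      | (d + 2) =>
        intro j h
        have e1 : j + (d + 2) = (j + d + 1) + 1 := by ring
        rw [e1, L1 j (j + d + 1) (by omega) (by omega)]
        have e2 : j + d + 1 = (j + 1) + d := by ring
        rw [e2]
        exact ih d (by omega) (j + 1) (by omega)
  intro j hj k hk
  rcases le_total j k with h | h
  · obtain ⟨d, rfl⟩ := Nat.exists_eq_add_of_le h
    exact key d j hk
  · obtain ⟨d, rfl⟩ := Nat.exists_eq_add_of_le h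
    rw [dotProduct_comm]
    exact key d k hj
end

section
/- Let A be a symmetric matrix with zero diagonal over a field of characteristic 2 with A e = 0, and let α_1, ..., α_ℓ be a Jordan chain for eigenvalue 0 (A α_1 = 0, A α_{k+1} = α_k). Then α_j^T α_k = 0 for all pairs (j,k) except possibly (j,k) = (ℓ,ℓ). -/
open Matrix

lemma alt_form {F : Type*} [Field F] [CharP F 2] {n : ℕ} (B : Matrix (Fin n) (Fin n) F)
    (hs : B.IsSymm) (hd : ∀ i, B i i = 0) (v : Fin n → F) : v ⬝ᵥ B.mulVec v = 0 := by
  classical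
  have hrw : v ⬝ᵥ B.mulVec v = ∑ p : Fin n × Fin n, v p.1 * (B p.1 p.2 * v p.2) := by
    simp only [dotProduct, mulVec, Finset.mul_sum]
    rw [← Finset.sum_product']
    rfl
  rw [hrw]
  apply Finset.sum_involution (fun p _ => (p.2, p.1))
  · intro p _
    have hB : B p.2 p.1 = B p.1 p.2 := hs.apply p.1 p.2
    simp only [hB]
    ring_nf
    rw [show (2:F) = 0 from CharP.cast_eq_zero F 2, mul_zero]
  · intro p _ hf hfix
    apply hf
    have h1 : p.2 = p.1 := congrArg Prod.fst hfix
    rw [h1, hd]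
    ring
  · intro p _; exact Finset.mem_univ _
  · intro p _; rfl

/-- Let `A` be a symmetric matrix with zero diagonal over a field of characteristic 2 with
`A e = 0`, and let `α 0, …, α (ℓ-1)` be a Jordan chain for the eigenvalue `0`. Then
`αⱼᵀ αₖ = 0` for all pairs `(j,k)` except possibly the last pair `(ℓ-1, ℓ-1)`. -/
theorem jordan_chain_gram_zero_of_zero_eigenvalue {F : Type*} [Field F] [CharP F 2]
    {n : ℕ} (A : Matrix (Fin n) (Fin n) F) (hsymm : A.IsSymm)
    (hdiag : ∀ i, A i i = 0) (he : A.mulVec (fun _ => 1) = 0)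
    (ℓ : ℕ) (α : ℕ → Fin n → F)
    (h1 : A.mulVec (α 0) = 0)
    (hchain : ∀ k, k + 1 < ℓ → A.mulVec (α (k + 1)) = α k) :
    ∀ j < ℓ, ∀ k < ℓ, ¬(j = ℓ - 1 ∧ k = ℓ - 1) → α j ⬝ᵥ α k = 0 := by
  classical
  have haltA : ∀ v, v ⬝ᵥ A.mulVec v = 0 := alt_form A hsymm hdiag
  have hAAsymm : (A * A).IsSymm := by
    unfold Matrix.IsSymm
    rw [transpose_mul, hsymm.eq]
  have hAAdiag : ∀ i, (A * A) i i = 0 := by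
    intro i
    rw [mul_apply]
    have hsum : ∀ k, A i k * A k i = A i k * A i k := fun k => by rw [hsymm.apply i k]
    rw [Finset.sum_congr rfl (fun k _ => hsum k), ← CharTwo.sum_mul_self]
    have h0 : ∑ k, A i k = 0 := by
      have := congrFun he i
      simpa [mulVec, dotProduct] using this
    rw [h0, mul_zero]
  have haltAA : ∀ v, v ⬝ᵥ (A * A).mulVec v = 0 := alt_form (A * A) hAAsymm hAAdiag
  -- symmetric matrix moves across dot products
  have hmove : ∀ v w, v ⬝ᵥ A.mulVec w = A.mulVec v ⬝ᵥ w := by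
    intro v w
    rw [dotProduct_mulVec, ← Matrix.mulVec_transpose, hsymm.eq]
  -- shift lemma
  have hshift : ∀ j k, j + 1 < ℓ → k + 1 < ℓ → α (j + 1) ⬝ᵥ α k = α j ⬝ᵥ α (k + 1) := by
    intro j k hj hk
    rw [← hchain k hk, hmove, hchain j hj]
  have main : ∀ d j k, k = j + d → k < ℓ → j + k + 3 ≤ 2 * ℓ → α j ⬝ᵥ α k = 0 := by
    intro d
    induction d using Nat.strong_induction_on with
    | _ d ih =>
      intro j k hd hk hsum
      rcases d with _ | _ | d
      · have hj1 : j + 1 < ℓ := by omega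
        have hjk : k = j := by omega
        rw [hjk, ← hchain j hj1, hmove, dotProduct_comm, Matrix.mulVec_mulVec]
        exact haltAA _
      · have hjk : k = j + 1 := by omega
        subst hjk
        rw [← hchain j (by omega : j + 1 < ℓ), dotProduct_comm]
        exact haltA _
      · have hk1 : k = (k - 1) + 1 := by omega
        have := hshift j (k - 1) (by omega) (by omega)
        rw [hk1, ← this]
        exact ih d (by omega) (j + 1) (k - 1) (by omega) (by omega) (by omega)
  intro j hj k hk hne
  rcases le_or_gt j k with h | h
  · exact main (k - j) j k (by omega) hk (by omega)
  · rw [dotProduct_comm]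
    exact main (j - k) k j (by omega) hj (by omega)
end

section
/- If Q is an invertible n×n matrix over a field that contains an r×r zero submatrix (r rows and r columns, not necessarily contiguous, whose intersection entries are all zero), then r ≤ n/2. -/
open Matrix

/-- If an invertible `n × n` matrix over a field contains an `r × r` zero submatrix (rows `I`
and columns `J`, not necessarily contiguous, with all intersection entries zero), then
`r ≤ n/2`, i.e. `2r ≤ n`. -/
theorem zero_submatrix_order_le_half {F : Type*} [Field F] {n : ℕ}
    (Q : Matrix (Fin n) (Fin n) F) (hQ : IsUnit Q)
    (r : ℕ) (I J : Finset (Fin n)) (hI : I.card = r) (hJ : J.card = r)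
    (hzero : ∀ i ∈ I, ∀ j ∈ J, Q i j = 0) :
    2 * r ≤ n := by
  have hrows : LinearIndependent F (fun i : Fin n ↦ Q i) :=
    Matrix.linearIndependent_rows_iff_isUnit.2 hQ
  -- restrict to rows in I
  have hsub : LinearIndependent F (fun i : I ↦ Q i) :=
    hrows.comp (fun i : I => (i : Fin n)) Subtype.val_injective
  -- restriction map to columns in Jᶜ
  let π : ((Fin n) → F) →ₗ[F] ((Jᶜ : Finset (Fin n)) → F) :=
    LinearMap.funLeft F F (fun j => (j : Fin n))
  have hdisj : Disjoint (Submodule.span F (Set.range fun i : I ↦ Q i))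
      (LinearMap.ker π) := by
    have hspan : ∀ x ∈ Submodule.span F (Set.range fun i : I ↦ Q i),
        ∀ j ∈ J, x j = 0 := by
      intro x hx j hj
      induction hx using Submodule.span_induction with
      | mem y hy =>
        obtain ⟨i, rfl⟩ := hy
        exact hzero i i.2 j hj
      | zero => rfl
      | add y z _ _ hy hz => simp [hy, hz]
      | smul c y _ hy => simp [hy]
    rw [Submodule.disjoint_def]
    intro x hx hker
    have hxJ : ∀ j ∈ J, x j = 0 := hspan x hx
    have hxJc : ∀ j : Fin n, j ∉ J → x j = 0 := by
      intro j hj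
      have := congrFun hker ⟨j, Finset.mem_compl.2 hj⟩
      simpa [π, LinearMap.funLeft] using this
    funext j
    by_cases hj : j ∈ J
    · exact hxJ j hj
    · exact hxJc j hj
  have hli : LinearIndependent F (π ∘ fun i : I ↦ Q i) := hsub.map hdisj
  have hcard := hli.fintype_card_le_finrank
  simp only [Module.finrank_pi, Fintype.card_coe] at hcard
  have hJc : (Jᶜ : Finset (Fin n)).card = n - r := by
    rw [Finset.card_compl, hJ, Fintype.card_fin]
  have hrn : r ≤ n := hJ ▸ (J.card_le_card (Finset.subset_univ J)).trans_eq (by simp)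
  omega
end

section
/- Let A be the mod-2 reduction of the adjacency matrix of an Eulerian graph on an even number of vertices, viewed over F̄_2. Then every Jordan block of A for the eigenvalue 0 has size at most half the algebraic multiplicity of 0. -/
/-!
Over a field of characteristic 2, a symmetric matrix `A` with zero diagonal and zero row sums has
alternating powers `A ^ k` (`k ≥ 1`): the diagonal of `A ^ (2j)` consists of the squares of the row
sums of `A ^ j`, and that of `A ^ (2j+1)` of values `y ⬝ᵥ A *ᵥ y` of the alternating form of `A`.
Alternating matrices have even rank (split off a hyperbolic pair and induct), so for `n` even every
`ker (A ^ k)` is even-dimensional. These kernels grow strictly up to the multiplicity `m` of `0` in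
the minimal polynomial, hence by at least `2` at each step, so the generalized `0`-eigenspace,
whose dimension is the multiplicity of `0` in the characteristic polynomial, has dimension at
least `dim ker (A ^ m) ≥ 2 m`.
-/

open Matrix Polynomial

namespace Matrix

variable {ι R K : Type*}

def IsAlternating [Neg R] [Zero R] (B : Matrix ι ι R) : Prop :=
  Bᵀ = -B ∧ ∀ i, B i i = 0

theorem IsAlternating.dotProduct_mulVec_self [Fintype ι] [CommRing R] {B : Matrix ι ι R}
    (hB : B.IsAlternating) (x : ι → R) : x ⬝ᵥ B *ᵥ x = 0 := by
  have hsum : x ⬝ᵥ B *ᵥ x = ∑ p : ι × ι, x p.1 * B p.1 p.2 * x p.2 := by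
    simp [dotProduct, mulVec, Finset.mul_sum, mul_assoc, Fintype.sum_prod_type]
  rw [hsum]
  refine Finset.sum_ninvolution Prod.swap (fun ⟨a, b⟩ => ?_) (fun ⟨a, b⟩ hp hswap => hp ?_)
    (fun _ => Finset.mem_univ _) Prod.swap_swap
  · have hskew : B b a = -B a b := congrFun (congrFun hB.1 a) b
    simp only [Prod.swap_prod_mk, hskew]
    ring
  · obtain rfl : b = a := congrArg Prod.fst hswap
    rw [hB.2, mul_zero, zero_mul]

section Field

variable [Field K]

/-- For alternating `B` with `B i j ≠ 0`: the form `(x, y) ↦ x ⬝ᵥ B *ᵥ y` minus its part on the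
hyperbolic pair `(e i, e j)`. -/
def hyperbolicReduction (B : Matrix ι ι K) (i j : ι) : Matrix ι ι K :=
  B + (B i j)⁻¹ • (vecMulVec (B j) (B i) - vecMulVec (B i) (B j))

variable {B : Matrix ι ι K} {i j : ι}

theorem IsAlternating.hyperbolicReduction (hB : B.IsAlternating) :
    (B.hyperbolicReduction i j).IsAlternating := by
  refine ⟨?_, fun k => ?_⟩
  · simp only [Matrix.hyperbolicReduction, transpose_add, transpose_smul, transpose_sub,
      transpose_vecMulVec, hB.1]
    rw [neg_add, ← smul_neg, neg_sub]
  · simp [Matrix.hyperbolicReduction, vecMulVec_apply, hB.2, mul_comm]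

variable [Fintype ι]

theorem hyperbolicReduction_mulVec (x : ι → K) :
    B.hyperbolicReduction i j *ᵥ x
      = B *ᵥ x + (B i j)⁻¹ • ((B *ᵥ x) i • B j - (B *ᵥ x) j • B i) := by
  simp only [Matrix.hyperbolicReduction, add_mulVec, smul_mulVec, sub_mulVec, vecMulVec_mulVec,
    op_smul_eq_smul]
  rfl

theorem rank_add_finrank_ker_mulVecLin (B : Matrix ι ι K) :
    B.rank + Module.finrank K B.mulVecLin.ker = Fintype.card ι := by
  rw [Matrix.rank, LinearMap.finrank_range_add_finrank_ker, Module.finrank_fintype_fun_eq_card]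

variable [DecidableEq ι]

theorem IsAlternating.mulVec_single_one (hB : B.IsAlternating) (i : ι) :
    B *ᵥ Pi.single i 1 = -B i := by
  ext k
  simpa using congrFun (congrFun hB.1 i) k

theorem IsAlternating.eq_zero_of_mulVec_pair (hB : B.IsAlternating) (hij : B i j ≠ 0) {a b : K}
    (h : B *ᵥ (a • Pi.single i 1 + b • Pi.single j 1) = 0) : a = 0 ∧ b = 0 := by
  have hji : B j i = -B i j := congrFun (congrFun hB.1 i) j
  rw [mulVec_add, mulVec_smul, mulVec_smul, hB.mulVec_single_one, hB.mulVec_single_one] at h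
  have hi := congrFun h i
  have hj := congrFun h j
  simp only [Pi.add_apply, Pi.smul_apply, Pi.neg_apply, smul_eq_mul, hB.2, hji,
    Pi.zero_apply] at hi hj
  constructor
  · simpa [hij] using hj
  · simpa [hij] using hi

theorem IsAlternating.ker_hyperbolicReduction (hB : B.IsAlternating) (hij : B i j ≠ 0) :
    (B.hyperbolicReduction i j).mulVecLin.ker
      = B.mulVecLin.ker ⊔ Submodule.span K (Set.range ![Pi.single i 1, Pi.single j 1]) := by
  have hji : B j i = -B i j := congrFun (congrFun hB.1 i) j
  apply le_antisymm
  · intro x hx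
    set y := B *ᵥ x
    set z := (B i j)⁻¹ • (y j • Pi.single i 1 - y i • Pi.single j 1)
    have hxz : B *ᵥ (x + z) = B.hyperbolicReduction i j *ᵥ x := by
      simp only [z, hyperbolicReduction_mulVec, mulVec_add, mulVec_smul, mulVec_sub,
        hB.mulVec_single_one]
      module
    refine Submodule.mem_sup.2 ⟨x + z, ?_, -z, ?_, by abel⟩
    · simpa [hxz] using hx
    · exact Submodule.neg_mem _ (Submodule.smul_mem _ _
        (Submodule.sub_mem _ (Submodule.smul_mem _ _ (Submodule.subset_span (Set.mem_range_self 0)))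
          (Submodule.smul_mem _ _ (Submodule.subset_span (Set.mem_range_self 1)))))
  · refine sup_le (fun x hx => ?_) (Submodule.span_le.2 (Set.range_subset_iff.2 ?_))
    · simp_all [hyperbolicReduction_mulVec]
    · simp [Fin.forall_fin_two, hyperbolicReduction_mulVec, hB.mulVec_single_one, hB.2, hji,
        smul_smul, hij]

theorem IsAlternating.rank_hyperbolicReduction_add_two (hB : B.IsAlternating) (hij : B i j ≠ 0) :
    (B.hyperbolicReduction i j).rank + 2 = B.rank := by
  have hindep : LinearIndependent K ![(Pi.single i 1 : ι → K), Pi.single j 1] :=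
    LinearIndependent.pair_iff.2 fun s t hst =>
      hB.eq_zero_of_mulVec_pair hij (by rw [hst, mulVec_zero])
  have hdisj : B.mulVecLin.ker ⊓ Submodule.span K (Set.range ![Pi.single i 1, Pi.single j 1])
      = ⊥ := by
    refine (Submodule.eq_bot_iff _).2 fun x ⟨hker, hspan⟩ => ?_
    obtain ⟨c, rfl⟩ := (Submodule.mem_span_range_iff_exists_fun K).1 hspan
    rw [Fin.sum_univ_two] at hker ⊢
    obtain ⟨h0, h1⟩ := hB.eq_zero_of_mulVec_pair hij hker
    simp [h0, h1]
  have hdim := Submodule.finrank_sup_add_finrank_inf_eq B.mulVecLin.ker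
    (Submodule.span K (Set.range ![Pi.single i 1, Pi.single j 1]))
  rw [← hB.ker_hyperbolicReduction hij, hdisj, finrank_bot, finrank_span_eq_card hindep] at hdim
  have := B.rank_add_finrank_ker_mulVecLin
  have := (B.hyperbolicReduction i j).rank_add_finrank_ker_mulVecLin
  simp only [Fintype.card_fin] at hdim
  omega

theorem IsAlternating.even_rank (hB : B.IsAlternating) : Even B.rank := by
  induction hr : B.rank using Nat.strong_induction_on generalizing B with
  | _ r ih =>
    by_cases h0 : B = 0
    · simp [← hr, h0]
    obtain ⟨i, j, hij⟩ : ∃ i j, B i j ≠ 0 := by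
      by_contra! h
      exact h0 (ext h)
    have hred := hB.rank_hyperbolicReduction_add_two hij
    rw [← hr, ← hred]
    exact (ih _ (by omega) hB.hyperbolicReduction rfl).add even_two

end Field

section CharTwo

variable [CommRing R] {B : Matrix ι ι R}

theorem IsSymm.mul_mul_apply_self [Fintype ι] {M : Matrix ι ι R} (hM : M.IsSymm)
    (B : Matrix ι ι R) (i : ι) : (M * B * M) i i = M i ⬝ᵥ B *ᵥ M i := by
  rw [mul_apply', dotProduct_mulVec]
  congr 1
  funext l
  exact hM.apply i l

variable [CharP R 2]

theorem IsSymm.isAlternating_of_charTwo (hsym : B.IsSymm) (hdiag : ∀ i, B i i = 0) :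
    B.IsAlternating :=
  ⟨by rw [hsym.eq]; ext a b; exact (CharTwo.neg_eq _).symm, hdiag⟩

variable [Fintype ι]

theorem IsSymm.mul_self_apply_self_of_charTwo (hsym : B.IsSymm) (i : ι) :
    (B * B) i i = (B *ᵥ 1) i ^ 2 := by
  rw [mul_apply, mulVec, dotProduct, sum_pow_char]
  refine Finset.sum_congr rfl fun l _ => ?_
  rw [hsym.apply i l, Pi.one_apply, mul_one, sq]

variable [DecidableEq ι]

theorem IsSymm.isAlternating_pow_of_charTwo (hsym : B.IsSymm) (hdiag : ∀ i, B i i = 0)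
    (hrow : B *ᵥ 1 = 0) {k : ℕ} (hk : k ≠ 0) : (B ^ k).IsAlternating := by
  refine (hsym.pow k).isAlternating_of_charTwo fun i => ?_
  obtain ⟨j, rfl | rfl⟩ := Nat.even_or_odd' k
  · obtain ⟨j, rfl⟩ := Nat.exists_eq_succ_of_ne_zero (by omega : j ≠ 0)
    rw [two_mul, pow_add, (hsym.pow _).mul_self_apply_self_of_charTwo, pow_succ B j,
      ← mulVec_mulVec, hrow, mulVec_zero, Pi.zero_apply, sq, zero_mul]
  · rw [two_mul, pow_succ, pow_add, mul_assoc, ← pow_succ B j, pow_succ' B j, ← mul_assoc,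
      (hsym.pow j).mul_mul_apply_self]
    exact (hsym.isAlternating_of_charTwo hdiag).dotProduct_mulVec_self _

end CharTwo

end Matrix

namespace Module.End

open LinearMap

variable {K V : Type*} [Field K] [AddCommGroup V] [Module K V] [FiniteDimensional K V]

theorem ker_pow_lt_ker_pow_succ (f : End K V) {k : ℕ}
    (hk : k < (minpoly K f).rootMultiplicity 0) : ker (f ^ k) < ker (f ^ (k + 1)) := by
  set m := (minpoly K f).rootMultiplicity 0
  refine lt_of_le_of_ne (by rw [pow_succ']; exact ker_le_ker_comp _ _) fun hstab => ?_
  obtain ⟨g, hg⟩ : X ^ m ∣ minpoly K f := by simpa using pow_rootMultiplicity_dvd (minpoly K f) 0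
  have hg0 : g ≠ 0 := by
    rintro rfl
    exact minpoly.ne_zero (Algebra.IsIntegral.isIntegral f) (by simpa using hg)
  have hann : aeval f (X ^ k * g) = 0 := by
    ext x
    -- `f ^ m` kills the image of `aeval f g`; if the kernels stabilise at `k`, so does `f ^ k`.
    have hx : aeval f g x ∈ ker (f ^ m) := by
      rw [mem_ker, ← mul_apply, ← aeval_X_pow (R := K), ← map_mul, ← hg, minpoly.aeval,
        LinearMap.zero_apply]
    rw [← Nat.add_sub_cancel' hk.le, ← ker_pow_constant hstab] at hx
    simpa using hx
  have hdvd : X ^ m * g ∣ X ^ k * g := hg ▸ minpoly.dvd K f hann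
  rw [mul_dvd_mul_iff_right hg0, pow_dvd_pow_iff X_ne_zero not_isUnit_X] at hdvd
  omega

theorem two_mul_rootMultiplicity_minpoly_le (f : End K V)
    (heven : ∀ k ≠ 0, Even (finrank K (ker (f ^ k)))) :
    2 * (minpoly K f).rootMultiplicity 0 ≤ (LinearMap.charpoly f).rootMultiplicity 0 := by
  set m := (minpoly K f).rootMultiplicity 0
  have hgrow : ∀ k ≤ m, 2 * k ≤ finrank K (ker (f ^ k)) := by
    intro k hk
    induction k with
    | zero => simp
    | succ k ih =>
      have hlt := Submodule.finrank_lt_finrank_of_lt (f.ker_pow_lt_ker_pow_succ hk)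
      obtain ⟨t, ht⟩ := heven (k + 1) k.succ_ne_zero
      have := ih (by omega)
      omega
  calc 2 * m ≤ finrank K (ker (f ^ m)) := hgrow m le_rfl
    _ ≤ (LinearMap.charpoly f).rootMultiplicity 0 := by
      have h := f.finrank_genEigenspace_le 0 m
      rwa [genEigenspace_nat, zero_smul, sub_zero] at h

end Module.End

theorem SimpleGraph.adjMatrix_mulVec_one_of_even_degree {V R : Type*} [Fintype V] [Ring R]
    [CharP R 2] (G : SimpleGraph V) [DecidableRel G.Adj] (hdeg : ∀ v, Even (G.degree v)) :
    G.adjMatrix R *ᵥ 1 = 0 := by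
  ext v
  rw [← Function.const_one, adjMatrix_mulVec_const_apply, mul_one, Pi.zero_apply,
    CharP.cast_eq_zero_iff R 2, ← even_iff_two_dvd]
  exact hdeg v

theorem jordan_block_size_le_half_multiplicity_of_zero_general {n : ℕ} (hn : Even n)
    (G : SimpleGraph (Fin n)) [DecidableRel G.Adj]
    (hdeg : ∀ v, Even (G.degree v)) :
    2 * (minpoly (AlgebraicClosure (ZMod 2))
          (G.adjMatrix (AlgebraicClosure (ZMod 2)))).rootMultiplicity 0
      ≤ (G.adjMatrix (AlgebraicClosure (ZMod 2))).charpoly.rootMultiplicity 0 := by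
  set A := G.adjMatrix (AlgebraicClosure (ZMod 2))
  have hA : ∀ k ≠ 0, (A ^ k).IsAlternating := fun k hk =>
    G.isSymm_adjMatrix.isAlternating_pow_of_charTwo (fun _ => by simp)
      (G.adjMatrix_mulVec_one_of_even_degree hdeg) hk
  rw [← minpoly_toLin', ← charpoly_toLin']
  refine Module.End.two_mul_rootMultiplicity_minpoly_le _ fun k hk => ?_
  have hrank := (A ^ k).rank_add_finrank_ker_mulVecLin
  rw [Fintype.card_fin] at hrank
  rw [← toLin'_pow, toLin'_apply', show Module.finrank _ _ = n - (A ^ k).rank by omega]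
  exact hn.tsub (hA k hk).even_rank

/-- Let `A` be the mod-2 reduction of the adjacency matrix of an Eulerian graph on an even
number of vertices, viewed over `F̄₂`. Then every Jordan block of `A` for the eigenvalue `0`
has size at most half the algebraic multiplicity of `0`: the largest block size is the
multiplicity of `0` as a root of the minimal polynomial. -/
theorem jordan_block_size_le_half_multiplicity_of_zero {n : ℕ} (hn : Even n)
    (G : SimpleGraph (Fin n)) [DecidableRel G.Adj]
    (hconn : G.Connected) (hdeg : ∀ v, Even (G.degree v)) :
    2 * (minpoly (AlgebraicClosure (ZMod 2))
          (G.adjMatrix (AlgebraicClosure (ZMod 2)))).rootMultiplicity 0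
      ≤ (G.adjMatrix (AlgebraicClosure (ZMod 2))).charpoly.rootMultiplicity 0 :=
  jordan_block_size_le_half_multiplicity_of_zero_general hn G hdeg
end

section
/- Let A be the adjacency matrix of an Eulerian graph on an odd number n of vertices. Over F̄_2, the generalized 0-eigenspace of A (mod 2) contains a Jordan block of size exactly 1 whose eigenvector can be taken to be the all-ones vector e; equivalently, if α_1,...,α_ℓ is the Jordan chain containing e as its eigenvector, then ℓ = 1. -/
open Matrix

/-- For the adjacency matrix `A` (mod 2) of an Eulerian graph on an odd number `n` of
vertices, the all-ones vector `e` generates a Jordan block of size exactly 1 for the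
eigenvalue 0: any Jordan chain `α 0, …, α (ℓ-1)` for eigenvalue 0 whose eigenvector is `e`
has length `ℓ = 1`. -/
theorem jordan_chain_of_allOnes_has_length_one {n : ℕ} (hn : Odd n)
    (A : Matrix (Fin n) (Fin n) (ZMod 2)) (hsymm : A.IsSymm)
    (hdiag : ∀ i, A i i = 0) (he : A.mulVec (fun _ => 1) = 0)
    (ℓ : ℕ) (hℓ : 1 ≤ ℓ) (α : ℕ → Fin n → ZMod 2)
    (hα0 : α 0 = fun _ => 1)
    (h1 : A.mulVec (α 0) = 0)
    (hchain : ∀ k, k + 1 < ℓ → A.mulVec (α (k + 1)) = α k) :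
    ℓ = 1 := by
  by_contra h
  have h2 : 2 ≤ ℓ := by omega
  have hc := hchain 0 (by omega)
  rw [hα0] at hc
  set e : Fin n → ZMod 2 := fun _ => 1 with he'
  have key : e ⬝ᵥ A.mulVec (α 1) = (A.mulVec e) ⬝ᵥ (α 1) := by
    rw [dotProduct_mulVec, ← mulVec_transpose, hsymm.eq]
  rw [hc, he] at key
  simp only [zero_dotProduct] at key
  have : e ⬝ᵥ e = (n : ZMod 2) := by
    simp [dotProduct, e]
  rw [this] at key
  have : (n : ZMod 2) = 1 := by
    obtain ⟨k, hk⟩ := hn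
    subst hk
    push_cast
    rw [show (2 : ZMod 2) = 0 from rfl]
    ring
  rw [this] at key
  exact one_ne_zero key
end

section
/- Let G be an Eulerian graph on an odd number n of vertices whose characteristic polynomial factors over F_2 as φ = x φ_1^2 with gcd(x, φ_1) = 1 (i.e., the multiplicity of eigenvalue 0 mod 2 is k = 1). Then φ_1(A) ≡ J_n (mod 2), the all-ones matrix, over F_2. -/
/-!
Write `A` for the adjacency matrix over `𝔽₂` and `𝟙` for the all-ones vector. `A` is symmetric
with zero diagonal, and `A 𝟙 = 0` because all degrees are even. Hence `x ⬝ A ^ m x = 0` for all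
`x` and `m ≥ 1`: for odd `m = 2r + 1` it is `y ⬝ A y` with `y = A ^ r x`, which vanishes for an
alternating form; for even `m = 2r` it is `y ⬝ y = (y ⬝ 𝟙) ^ 2 = (x ⬝ A ^ r 𝟙) ^ 2 = 0`.

Consequently, for every `v` the `A`-invariant subspace `U` spanned by the `A ^ (k + 1) v` is
totally isotropic, so `U ≤ U⊥`. The minimal polynomial `μ` of `A` on `U` divides the
characteristic polynomial of `A` on `U⊥`, and also the characteristic polynomial `χ` of the map
induced on `𝔽₂ⁿ ⧸ U⊥`: `χ(A)` maps everything into `U⊥`, so by symmetry `χ(A) u` is orthogonal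
to every vector when `u ∈ U`. Hence `μ ^ 2 ∣ X φ₁ ^ 2`, and `μ ∣ φ₁` because `X ∤ φ₁`. Applied
to `A v ∈ U`, this gives `φ₁(A) A = 0`.

As `0` is a simple root of the characteristic polynomial, `ker A = ⟨𝟙⟩`. So every column of the
symmetric matrix `φ₁(A)` is constant, and `φ₁(A) 𝟙 = φ₁(0) 𝟙 = 𝟙` rules out a zero column.
-/

open Matrix Polynomial

namespace LinearMap

section

variable {R V W : Type*} [CommRing R] [AddCommGroup V] [Module R V] [AddCommGroup W] [Module R W]

theorem comp_aeval_of_comp_eq {f : Module.End R V} {g : Module.End R W} {L : V →ₗ[R] W}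
    (h : L ∘ₗ f = g ∘ₗ L) (ψ : R[X]) : L ∘ₗ aeval f ψ = aeval g ψ ∘ₗ L := by
  induction ψ using Polynomial.induction_on' with
  | add p q hp hq => simp only [map_add, comp_add, add_comp, hp, hq]
  | monomial k a =>
    have hpow : L ∘ₗ (f ^ k) = (g ^ k) ∘ₗ L := by
      induction k with
      | zero => rfl
      | succ k ih => rw [pow_succ, pow_succ, Module.End.mul_eq_comp, Module.End.mul_eq_comp,
          ← comp_assoc, ih, comp_assoc, h, comp_assoc]
    simp only [aeval_monomial, Module.End.mul_eq_comp, Module.algebraMap_end_eq_smul_id,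
      smul_comp, comp_smul, id_comp, hpow]

theorem aeval_restrict_eq_zero_iff (f : Module.End R V) {p : Submodule R V}
    (hp : p ≤ p.comap f) (ψ : R[X]) :
    aeval (f.restrict hp) ψ = 0 ↔ ∀ x ∈ p, aeval f ψ x = 0 := by
  have h : ∀ x : p, (aeval (f.restrict hp) ψ x : V) = aeval f ψ x := LinearMap.congr_fun
    (comp_aeval_of_comp_eq (L := p.subtype) (f := f.restrict hp) (g := f) rfl ψ)
  refine ⟨fun h0 x hx => ?_, fun h0 => ext fun x => Subtype.ext ?_⟩
  · simpa [h0] using (h ⟨x, hx⟩).symm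
  · simpa [h] using h0 x x.2

theorem aeval_mem_of_aeval_mapQ_eq_zero (f : Module.End R V) {p : Submodule R V}
    (hp : p ≤ p.comap f) {ψ : R[X]} (hψ : aeval (p.mapQ p f hp) ψ = 0) (x : V) :
    aeval f ψ x ∈ p := by
  have h := LinearMap.congr_fun (comp_aeval_of_comp_eq (L := p.mkQ) (f := f) (g := p.mapQ p f hp)
    (p.mapQ_mkQ p f).symm ψ) x
  simpa [hψ, Submodule.Quotient.mk_eq_zero] using h

end

variable {K V : Type*} [Field K] [AddCommGroup V] [Module K V]

theorem minpoly_restrict_dvd_iff (f : Module.End K V) {p : Submodule K V} (hp : p ≤ p.comap f)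
    (ψ : K[X]) :
    minpoly K (f.restrict hp) ∣ ψ ↔ ∀ x ∈ p, aeval f ψ x = 0 := by
  rw [minpoly.dvd_iff, aeval_restrict_eq_zero_iff]

theorem charpoly_eq_charpoly_restrict_mul_charpoly_mapQ [FiniteDimensional K V]
    (f : Module.End K V) {p : Submodule K V} (hp : p ≤ p.comap f) :
    f.charpoly = (f.restrict hp).charpoly * (p.mapQ p f hp).charpoly := by
  let bp := Module.finBasis K p
  let bq := Module.finBasis K (V ⧸ p)
  let b := bp.sumQuot bq
  have h₁₁ : (toMatrix b b f).toBlocks₁₁ = toMatrix bp bp (f.restrict hp) := by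
    ext i j
    simp only [toBlocks₁₁, toMatrix_apply, of_apply, b, Module.Basis.sumQuot_inl]
    exact Module.Basis.sumQuot_repr_inl_of_mem bp bq _ (hp (bp j).2) i
  have h₂₁ : (toMatrix b b f).toBlocks₂₁ = 0 := by
    ext i j
    simp [toBlocks₂₁, toMatrix_apply, b, (Submodule.Quotient.mk_eq_zero p).mpr (hp (bp j).2)]
  have h₂₂ : (toMatrix b b f).toBlocks₂₂ = toMatrix bq bq (p.mapQ p f hp) := by
    ext i j
    simp only [toBlocks₂₂, toMatrix_apply, of_apply, b, Module.Basis.sumQuot_repr_inr]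
    rw [← Module.Basis.sumQuot_inr bp bq j, Submodule.mkQ_apply, Submodule.mapQ_apply]
  rw [← charpoly_toMatrix f b, ← fromBlocks_toBlocks (toMatrix b b f), h₂₁,
    charpoly_fromBlocks_zero₂₁, h₁₁, h₂₂, charpoly_toMatrix, charpoly_toMatrix]

end LinearMap

namespace Polynomial

theorem dvd_of_sq_dvd_X_mul_sq {K : Type*} [Field K] {μ φ : K[X]} (hφ : φ.coeff 0 ≠ 0)
    (h : μ ^ 2 ∣ X * φ ^ 2) : μ ∣ φ := by
  have hXφ : ¬X ∣ φ := by rwa [X_dvd_iff]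
  have hXμ : IsCoprime X μ := by
    rw [irreducible_X.coprime_iff_not_dvd]
    rintro ⟨c, rfl⟩
    obtain ⟨d, hd⟩ := h
    refine hXφ (prime_X.dvd_of_dvd_pow (n := 2) ⟨c ^ 2 * d, mul_left_cancel₀ X_ne_zero ?_⟩)
    rw [hd]
    ring
  exact (UniqueFactorizationMonoid.pow_dvd_pow_iff_dvd two_ne_zero).1
    (hXμ.pow_right.symm.dvd_of_dvd_mul_left h)

theorem rootMultiplicity_zero_X_mul_sq {K : Type*} [Field K] {φ : K[X]} (hφ : φ.coeff 0 ≠ 0) :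
    (X * φ ^ 2).rootMultiplicity 0 = 1 := by
  have hφ0 : φ ≠ 0 := fun h => hφ (by simp [h])
  rw [rootMultiplicity_mul (mul_ne_zero X_ne_zero (pow_ne_zero 2 hφ0)), ← sub_zero X, ← C_0,
    rootMultiplicity_X_sub_C_self, rootMultiplicity_eq_zero]
  · simpa [coeff_zero_eq_eval_zero] using hφ

end Polynomial

namespace Matrix

section

variable {ι R : Type*} [Fintype ι] [CommSemiring R]

theorem IsSymm.mulVec_dotProduct {M : Matrix ι ι R} (hM : M.IsSymm) (x y : ι → R) :
    (M *ᵥ x) ⬝ᵥ y = x ⬝ᵥ (M *ᵥ y) := by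
  rw [dotProduct_mulVec, ← vecMul_transpose, hM.eq]

theorem dotProduct_eq_zero_of_mem_span {S : Set (ι → R)} (hS : ∀ x ∈ S, ∀ y ∈ S, x ⬝ᵥ y = 0)
    {x y : ι → R} (hx : x ∈ Submodule.span R S) (hy : y ∈ Submodule.span R S) : x ⬝ᵥ y = 0 := by
  induction hx, hy using Submodule.span_induction₂ with
  | mem_mem x y hx hy => exact hS x hx y hy
  | zero_left => exact zero_dotProduct _
  | zero_right => exact dotProduct_zero _
  | add_left x y z _ _ _ hxz hyz => rw [add_dotProduct, hxz, hyz, add_zero]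
  | add_right x y z _ _ _ hxy hxz => rw [dotProduct_add, hxy, hxz, add_zero]
  | smul_left r x y _ _ h => rw [smul_dotProduct, h, smul_zero]
  | smul_right r x y _ _ h => rw [dotProduct_smul, h, smul_zero]

variable [DecidableEq ι] in
theorem aeval_mulVecLin_apply (A : Matrix ι ι R) (ψ : R[X]) (x : ι → R) :
    aeval A.mulVecLin ψ x = aeval A ψ *ᵥ x := by
  have h : toLinAlgEquiv' A = A.mulVecLin := LinearMap.ext fun _ => toLinAlgEquiv'_apply A _
  rw [← h, aeval_algEquiv, AlgHom.comp_apply]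
  exact toLinAlgEquiv'_apply _ x

variable [DecidableEq ι] in
theorem IsSymm.aeval {A : Matrix ι ι R} (hA : A.IsSymm) (ψ : R[X]) : (aeval A ψ).IsSymm := by
  rw [aeval_eq_sum_range]
  exact Finset.sum_induction _ IsSymm (fun _ _ => IsSymm.add) isSymm_zero
    fun i _ => (hA.pow i).smul _

theorem eq_of_isSymm_of_mulVec_one_eq_one {B : Matrix ι ι (ZMod 2)} (hB : B.IsSymm)
    (hcol : ∀ i k j, B i j = B k j) (hB1 : B *ᵥ 1 = 1) : B = of fun _ _ => 1 := by
  ext i j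
  have hrow : ∀ k, B i k = B i j := fun k => by
    rw [← hB.apply i k, ← hB.apply i j, hcol k j i]
  have hsum : ∑ k, B i k = 1 := by simpa [mulVec, dotProduct] using congrFun hB1 i
  have hBij : B i j ≠ 0 := fun h => one_ne_zero (α := ZMod 2) (by simpa [hrow, h] using hsum.symm)
  simpa using (show ∀ a : ZMod 2, a ≠ 0 → a = 1 by decide) _ hBij

end

section CharTwo

variable {ι R : Type*} [Fintype ι] [CommRing R] [CharP R 2]

theorem dotProduct_mulVec_self_eq_zero {A : Matrix ι ι R} (hA : A.IsSymm)
    (hdiag : ∀ i, A i i = 0) (x : ι → R) : x ⬝ᵥ (A *ᵥ x) = 0 := by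
  have hsum : x ⬝ᵥ (A *ᵥ x) = ∑ p : ι × ι, x p.1 * A p.1 p.2 * x p.2 := by
    simp [Fintype.sum_prod_type, dotProduct, mulVec, Finset.mul_sum, mul_assoc]
  rw [hsum]
  refine Finset.sum_involution (fun p _ => p.swap) (fun p _ => ?_) (fun p _ hp hswap => ?_)
    (by simp) (by simp)
  · rw [Prod.fst_swap, Prod.snd_swap, hA.apply p.1 p.2,
      show x p.2 * A p.1 p.2 * x p.1 = x p.1 * A p.1 p.2 * x p.2 by ring, CharTwo.add_self_eq_zero]
  · obtain ⟨i, j⟩ := p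
    obtain rfl : j = i := congrArg Prod.fst hswap
    simp [hdiag] at hp

variable [DecidableEq ι] in
theorem dotProduct_pow_succ_mulVec_self_eq_zero {A : Matrix ι ι R} (hA : A.IsSymm)
    (hdiag : ∀ i, A i i = 0) (h1 : A *ᵥ 1 = 0) (x : ι → R) (m : ℕ) :
    x ⬝ᵥ (A ^ (m + 1) *ᵥ x) = 0 := by
  obtain ⟨r, hr | hr⟩ := Nat.even_or_odd' (m + 1)
  · obtain ⟨s, rfl⟩ : ∃ s, r = s + 1 := Nat.exists_eq_succ_of_ne_zero (by omega)
    rw [hr, two_mul, pow_add, ← mulVec_mulVec, ← (hA.pow _).mulVec_dotProduct]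
    have hsq : ∀ y : ι → R, y ⬝ᵥ y = (y ⬝ᵥ 1) ^ 2 := fun y => by
      simp only [dotProduct, Pi.one_apply, mul_one, sq]
      exact (CharTwo.sum_mul_self _ _).symm
    rw [hsq, (hA.pow _).mulVec_dotProduct, pow_succ A s, ← mulVec_mulVec, h1, mulVec_zero,
      dotProduct_zero, zero_pow two_ne_zero]
  · rw [hr, show 2 * r + 1 = r + (r + 1) by ring, pow_add, pow_succ', ← mulVec_mulVec,
      ← (hA.pow r).mulVec_dotProduct, ← mulVec_mulVec]
    exact dotProduct_mulVec_self_eq_zero hA hdiag _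

end CharTwo

variable {ι K : Type*} [Fintype ι] [DecidableEq ι] [Field K]

theorem sq_minpoly_restrict_dvd_charpoly_of_isotropic {A : Matrix ι ι K} (hA : A.IsSymm)
    {U : Submodule K (ι → K)} (hU : U ≤ U.comap A.mulVecLin)
    (hiso : ∀ x ∈ U, ∀ y ∈ U, x ⬝ᵥ y = 0) :
    minpoly K (A.mulVecLin.restrict hU) ^ 2 ∣ A.charpoly := by
  let P := LinearMap.BilinForm.orthogonal (dotProductBilin K K) U
  have hmemP : ∀ y, y ∈ P ↔ ∀ u ∈ U, u ⬝ᵥ y = 0 := fun y => by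
    simp [P, LinearMap.BilinForm.mem_orthogonal_iff]
  have hUP : U ≤ P := fun y hy => (hmemP y).2 fun u hu => hiso u hu y hy
  have hP : P ≤ P.comap A.mulVecLin := fun y hy => (hmemP _).2 fun u hu => by
    rw [mulVecLin_apply, ← hA.mulVec_dotProduct]
    exact (hmemP y).1 hy _ (hU hu)
  set χP := (A.mulVecLin.restrict hP).charpoly
  set χQ := (P.mapQ P A.mulVecLin hP).charpoly
  have hP_dvd : minpoly K (A.mulVecLin.restrict hU) ∣ χP := by
    rw [LinearMap.minpoly_restrict_dvd_iff]
    intro u hu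
    exact (LinearMap.aeval_restrict_eq_zero_iff _ hP χP).1
      (LinearMap.aeval_self_charpoly _) u (hUP hu)
  have hQ_dvd : minpoly K (A.mulVecLin.restrict hU) ∣ χQ := by
    rw [LinearMap.minpoly_restrict_dvd_iff]
    intro u hu
    rw [aeval_mulVecLin_apply]
    refine dotProduct_eq_zero _ fun x => ?_
    rw [(hA.aeval χQ).mulVec_dotProduct, ← aeval_mulVecLin_apply]
    exact (hmemP _).1 (LinearMap.aeval_mem_of_aeval_mapQ_eq_zero _ hP
      (LinearMap.aeval_self_charpoly _) x) u hu
  rw [← charpoly_mulVecLin, LinearMap.charpoly_eq_charpoly_restrict_mul_charpoly_mapQ _ hP, sq]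
  exact mul_dvd_mul hP_dvd hQ_dvd

theorem aeval_mulVec_of_mulVec_eq_zero {A : Matrix ι ι K} {v : ι → K} (hv : A *ᵥ v = 0)
    (ψ : K[X]) : aeval A ψ *ᵥ v = ψ.coeff 0 • v := by
  rcases eq_or_ne v 0 with rfl | hv0
  · simp
  rw [← aeval_mulVecLin_apply, coeff_zero_eq_eval_zero]
  exact Module.End.aeval_apply_of_hasEigenvector
    ⟨(Module.End.mem_eigenspace_iff (μ := 0)).2 (by simpa using hv), hv0⟩

theorem apply_eq_apply_of_mul_eq_zero {A B : Matrix ι ι K}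
    (hker : Module.finrank K (LinearMap.ker A.mulVecLin) ≤ 1) (h1 : A *ᵥ 1 = 0)
    (hAB : A * B = 0) (i k j : ι) : B i j = B k j := by
  have h10 : (1 : ι → K) ≠ 0 := fun h => one_ne_zero (congrFun h i)
  have hker1 : LinearMap.ker A.mulVecLin = K ∙ 1 :=
    (Submodule.eq_of_le_of_finrank_le ((Submodule.span_singleton_le_iff_mem _ _).2 h1)
      (hker.trans_eq (finrank_span_singleton h10).symm)).symm
  have hj : B *ᵥ Pi.single j 1 ∈ LinearMap.ker A.mulVecLin := by
    rw [LinearMap.mem_ker, mulVecLin_apply, mulVec_mulVec, hAB, zero_mulVec]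
  obtain ⟨c, hc⟩ := Submodule.mem_span_singleton.1 (hker1 ▸ hj)
  have hcol : ∀ i, B i j = c := fun i => by simpa [mulVec_single] using (congrFun hc i).symm
  rw [hcol, hcol]

theorem aeval_mul_eq_zero_of_charpoly_eq_X_mul_sq [CharP K 2]
    {A : Matrix ι ι K} (hA : A.IsSymm) (hdiag : ∀ i, A i i = 0) (h1 : A *ᵥ 1 = 0) {φ : K[X]}
    (hχ : A.charpoly = X * φ ^ 2) (hφ : φ.coeff 0 ≠ 0) : aeval A φ * A = 0 := by
  refine ext_iff_mulVec.2 fun v => ?_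
  rw [zero_mulVec, ← mulVec_mulVec, ← aeval_mulVecLin_apply]
  let U := Submodule.span K (Set.range fun k : ℕ => A ^ (k + 1) *ᵥ v)
  have hU : U ≤ U.comap A.mulVecLin := Submodule.span_le.2 <| by
    rintro _ ⟨k, rfl⟩
    exact Submodule.subset_span ⟨k + 1, by simp [pow_succ' A (k + 1), mulVec_mulVec]⟩
  have hiso : ∀ x ∈ U, ∀ y ∈ U, x ⬝ᵥ y = 0 := fun x hx y hy => by
    refine dotProduct_eq_zero_of_mem_span ?_ hx hy
    rintro _ ⟨k, rfl⟩ _ ⟨l, rfl⟩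
    rw [(hA.pow _).mulVec_dotProduct, mulVec_mulVec, ← pow_add, add_assoc, ← add_assoc 1,
      add_comm 1]
    exact dotProduct_pow_succ_mulVec_self_eq_zero hA hdiag h1 v _
  have hμ := dvd_of_sq_dvd_X_mul_sq hφ
    (hχ ▸ sq_minpoly_restrict_dvd_charpoly_of_isotropic hA hU hiso)
  exact (LinearMap.minpoly_restrict_dvd_iff _ hU φ).1 hμ _ (Submodule.subset_span ⟨0, by simp⟩)

end Matrix

theorem SimpleGraph.adjMatrix_mulVec_one_eq_zero {V R : Type*} [Fintype V] [NonAssocRing R]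
    [CharP R 2] (G : SimpleGraph V) [DecidableRel G.Adj] (hdeg : ∀ v, Even (G.degree v)) :
    G.adjMatrix R *ᵥ 1 = 0 := by
  ext v
  refine (G.adjMatrix_mulVec_const_apply (a := (1 : R))).trans ?_
  rw [mul_one]
  exact (CharP.cast_eq_zero_iff R 2 _).2 (even_iff_two_dvd.1 (hdeg v))

theorem phi_one_eval_eq_allOnes_general {n : ℕ}
    (G : SimpleGraph (Fin n)) [DecidableRel G.Adj]
    (hdeg : ∀ v, Even (G.degree v))
    (φ₁ : Polynomial (ZMod 2))
    (hfac : (G.adjMatrix (ZMod 2)).charpoly = X * φ₁ ^ 2)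
    (hcoprime : φ₁.coeff 0 ≠ 0) :
    Polynomial.aeval (G.adjMatrix (ZMod 2)) φ₁ = Matrix.of (fun _ _ => (1 : ZMod 2)) := by
  set A := G.adjMatrix (ZMod 2)
  have hA : A.IsSymm := G.isSymm_adjMatrix
  have h1 : A *ᵥ 1 = 0 := G.adjMatrix_mulVec_one_eq_zero hdeg
  have hBA : aeval A φ₁ * A = 0 :=
    aeval_mul_eq_zero_of_charpoly_eq_X_mul_sq hA (by simp [A]) h1 hfac hcoprime
  have hAB : A * aeval A φ₁ = 0 := by
    simpa [hBA] using ((Commute.all X φ₁).map (aeval A)).eq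
  have hker : Module.finrank (ZMod 2) (LinearMap.ker A.mulVecLin) ≤ 1 := by
    rw [← Module.End.eigenspace_zero]
    refine (LinearMap.finrank_eigenspace_le _ 0).trans_eq ?_
    rw [charpoly_mulVecLin, hfac, rootMultiplicity_zero_X_mul_sq hcoprime]
  have hφ₁ : φ₁.coeff 0 = 1 := (show ∀ a : ZMod 2, a ≠ 0 → a = 1 by decide) _ hcoprime
  refine eq_of_isSymm_of_mulVec_one_eq_one (hA.aeval φ₁)
    (apply_eq_apply_of_mul_eq_zero hker h1 hAB) ?_
  rw [aeval_mulVec_of_mulVec_eq_zero h1, hφ₁, one_smul]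

/-- Let `G` be an Eulerian graph on an odd number `n` of vertices whose characteristic
polynomial factors over `F₂` as `φ = x · φ₁²` with `gcd(x, φ₁) = 1` (i.e. `φ₁(0) ≠ 0`). Then
`φ₁(A) = Jₙ`, the all-ones matrix, over `F₂`. -/
theorem phi_one_eval_eq_allOnes {n : ℕ} (hn : Odd n)
    (G : SimpleGraph (Fin n)) [DecidableRel G.Adj]
    (hconn : G.Connected) (hdeg : ∀ v, Even (G.degree v))
    (φ₁ : Polynomial (ZMod 2))
    (hfac : (G.adjMatrix (ZMod 2)).charpoly = X * φ₁ ^ 2)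
    (hcoprime : φ₁.coeff 0 ≠ 0) :
    Polynomial.aeval (G.adjMatrix (ZMod 2)) φ₁ = Matrix.of (fun _ _ => (1 : ZMod 2)) :=
  phi_one_eval_eq_allOnes_general G hdeg φ₁ hfac hcoprime
end

section
/- Let Q be a rational orthogonal n×n matrix and suppose Q X = Y for nonsingular integer matrices X, Y. Then the level ℓ of Q (the least positive integer such that ℓQ is integral) divides the n-th invariant factor d_n(X) of the Smith normal form of X. -/
open Matrix

/-- Let `Q` be a rational orthogonal matrix and `Q X = Y` for nonsingular integer matrices
`X, Y`. Then the level `ℓ` of `Q` (the least positive integer such that `ℓ Q` is integral)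
divides the last invariant factor `dₙ` of the Smith normal form `U X V = diag(d₁, …, dₙ)`
(`U, V` unimodular, `dᵢ ∣ dᵢ₊₁`) of `X`. -/
theorem level_dvd_last_invariant_factor {n : ℕ}
    (Q : Matrix (Fin (n + 1)) (Fin (n + 1)) ℚ) (horth : Qᵀ * Q = 1)
    (X Y : Matrix (Fin (n + 1)) (Fin (n + 1)) ℤ)
    (hX : X.det ≠ 0) (hY : Y.det ≠ 0)
    (hQXY : Q * X.map (Int.cast : ℤ → ℚ) = Y.map (Int.cast : ℤ → ℚ))
    (ℓ : ℕ)
    (hℓ : IsLeast {k : ℕ | 0 < k ∧ ∀ i j, ∃ m : ℤ, (k : ℚ) * Q i j = (m : ℚ)} ℓ)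
    (U V : Matrix (Fin (n + 1)) (Fin (n + 1)) ℤ)
    (hU : IsUnit U.det) (hV : IsUnit V.det)
    (d : Fin (n + 1) → ℤ) (hdvd : ∀ i j : Fin (n + 1), i ≤ j → d i ∣ d j)
    (hSNF : U * X * V = Matrix.diagonal d) :
    (ℓ : ℤ) ∣ d (Fin.last n) := by
  classical
  set c : ℤ := d (Fin.last n) with hc
  -- d (last) ≠ 0
  have hprod : U.det * X.det * V.det = ∏ i, d i := by
    have := congrArg Matrix.det hSNF
    simpa [Matrix.det_mul, Matrix.det_diagonal] using this
  have hcne : c ≠ 0 := by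
    intro h0
    have : (∏ i, d i) = 0 := Finset.prod_eq_zero (Finset.mem_univ (Fin.last n)) h0
    rw [← hprod] at this
    rcases mul_eq_zero.mp this with h | h
    · rcases mul_eq_zero.mp h with h | h
      · exact hU.ne_zero h
      · exact hX h
    · exact hV.ne_zero h
  set f : ℤ →+* ℚ := Int.castRingHom ℚ with hf
  set A := X.map (Int.cast : ℤ → ℚ) with hA
  have hAf : A = X.map f := rfl
  have hAdet : IsUnit A.det := by
    have hd : A.det = ((X.det : ℤ) : ℚ) := by
      rw [hAf, show X.map ⇑f = f.mapMatrix X from rfl, ← RingHom.map_det]; rfl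
    rw [hd]
    exact isUnit_iff_ne_zero.mpr (by exact_mod_cast hX)
  have hVdet : IsUnit (V.map f).det := by
    have hd : (V.map ⇑f).det = ((V.det : ℤ) : ℚ) := by
      rw [show V.map ⇑f = f.mapMatrix V from rfl, ← RingHom.map_det]; rfl
    rw [hd]
    exact isUnit_iff_ne_zero.mpr (by exact_mod_cast hV.ne_zero)
  have hVinv : V.map f * (V.map f)⁻¹ = 1 := Matrix.mul_nonsing_inv _ hVdet
  have hAinv : A * A⁻¹ = 1 := Matrix.mul_nonsing_inv _ hAdet
  -- the rational diagonal correction matrix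
  set Dq : Matrix (Fin (n+1)) (Fin (n+1)) ℚ :=
    Matrix.diagonal (fun i => ((c / d i : ℤ) : ℚ)) with hDq
  have hDqDd : Dq * (Matrix.diagonal d).map f =
      (c : ℚ) • (1 : Matrix (Fin (n+1)) (Fin (n+1)) ℚ) := by
    rw [Matrix.diagonal_map (map_zero f), hDq, Matrix.diagonal_mul_diagonal,
      Matrix.smul_one_eq_diagonal]
    refine congrArg Matrix.diagonal (funext fun i => ?_)
    have h : c / d i * d i = c := Int.ediv_mul_cancel (hdvd i (Fin.last n) (Fin.le_last i))
    have hfd : f (d i) = ((d i : ℤ) : ℚ) := rfl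
    rw [hfd]
    exact_mod_cast h
  have hUA : U.map f * A = (Matrix.diagonal d).map f * (V.map f)⁻¹ := by
    have h1 : U.map f * A * V.map f = (Matrix.diagonal d).map f := by
      rw [hAf, ← Matrix.map_mul, ← Matrix.map_mul, hSNF]
    calc U.map f * A = U.map f * A * (V.map f * (V.map f)⁻¹) := by rw [hVinv, mul_one]
      _ = (U.map f * A * V.map f) * (V.map f)⁻¹ := by simp only [mul_assoc]
      _ = (Matrix.diagonal d).map f * (V.map f)⁻¹ := by rw [h1]
  have key : ((c : ℚ) • Q) * A = (Y.map f * V.map f * Dq * U.map f) * A := by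
    have lhs : ((c : ℚ) • Q) * A = (c : ℚ) • Y.map f := by
      rw [Matrix.smul_mul, hQXY]; rfl
    have rhs : (Y.map f * V.map f * Dq * U.map f) * A = (c : ℚ) • Y.map f := by
      calc (Y.map f * V.map f * Dq * U.map f) * A
          = Y.map f * V.map f * Dq * (U.map f * A) := by rw [mul_assoc]
        _ = Y.map f * V.map f * (Dq * (Matrix.diagonal d).map f) * (V.map f)⁻¹ := by
            rw [hUA]; rw [← mul_assoc, ← mul_assoc]
        _ = Y.map f * V.map f * ((c : ℚ) • 1) * (V.map f)⁻¹ := by rw [hDqDd]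
        _ = (c : ℚ) • (Y.map f * (V.map f * (V.map f)⁻¹)) := by
            rw [Matrix.mul_smul, mul_one, Matrix.smul_mul, mul_assoc]
        _ = (c : ℚ) • Y.map f := by rw [hVinv, mul_one]
    rw [lhs, rhs]
  have hmain : (c : ℚ) • Q = Y.map f * V.map f * Dq * U.map f := by
    calc (c : ℚ) • Q = ((c : ℚ) • Q) * (A * A⁻¹) := by rw [hAinv, mul_one]
      _ = (((c : ℚ) • Q) * A) * A⁻¹ := by rw [mul_assoc]
      _ = ((Y.map f * V.map f * Dq * U.map f) * A) * A⁻¹ := by rw [key]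
      _ = (Y.map f * V.map f * Dq * U.map f) * (A * A⁻¹) := by rw [mul_assoc]
      _ = Y.map f * V.map f * Dq * U.map f := by rw [hAinv, mul_one]
  -- extract an integer matrix
  set M : Matrix (Fin (n+1)) (Fin (n+1)) ℤ :=
    Y * V * Matrix.diagonal (fun i => c / d i) * U with hM
  have hMmap : (c : ℚ) • Q = M.map f := by
    rw [hmain, hM, Matrix.map_mul, Matrix.map_mul, Matrix.map_mul,
      Matrix.diagonal_map (map_zero f)]
    rfl
  have hentry : ∀ i j, (c : ℚ) * Q i j = (M i j : ℚ) := by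
    intro i j
    have := congrFun (congrFun hMmap i) j
    simpa [Matrix.smul_apply, Matrix.map_apply, hf] using this
  -- membership of c.natAbs in the set
  have hmem : ∀ k : ℤ, (∀ i j, ∃ m : ℤ, (k : ℚ) * Q i j = (m : ℚ)) →
      ∀ k' : ℤ, (∀ i j, ∃ m : ℤ, (k' : ℚ) * Q i j = (m : ℚ)) →
      ∀ i j, ∃ m : ℤ, ((k - k') : ℚ) * Q i j = (m : ℚ) := by
    intro k hk k' hk' i j
    obtain ⟨m1, hm1⟩ := hk i j
    obtain ⟨m2, hm2⟩ := hk' i j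
    exact ⟨m1 - m2, by push_cast; rw [sub_mul, hm1, hm2]⟩
  have hcmem : ∀ i j, ∃ m : ℤ, ((c : ℤ) : ℚ) * Q i j = (m : ℚ) := by
    intro i j; exact ⟨M i j, by exact_mod_cast hentry i j⟩
  -- integrality is closed under ℤ-linear combos; establish it for any ℤ multiple of ℓ subtracted
  have hℓpos : 0 < ℓ := hℓ.1.1
  have hℓint : ∀ i j, ∃ m : ℤ, ((ℓ : ℤ) : ℚ) * Q i j = (m : ℚ) := by
    intro i j
    obtain ⟨m, hm⟩ := hℓ.1.2 i j
    exact ⟨m, by exact_mod_cast hm⟩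
  -- show ℓ ∣ c.natAbs in ℕ
  have hdvdnat : ℓ ∣ c.natAbs := by
    by_contra hnd
    set r : ℕ := c.natAbs % ℓ with hr
    have hrne : r ≠ 0 := fun h => hnd (Nat.dvd_of_mod_eq_zero h)
    have hrlt : r < ℓ := Nat.mod_lt _ hℓpos
    have hrint : ∀ i j, ∃ m : ℤ, (r : ℚ) * Q i j = (m : ℚ) := by
      set q : ℕ := c.natAbs / ℓ with hq
      set kq : ℤ := (ℓ : ℤ) * (q : ℤ) with hkq
      have hℓmul : ∀ i j, ∃ m : ℤ, (kq : ℚ) * Q i j = (m : ℚ) := by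
        intro i j
        obtain ⟨m, hm⟩ := hℓint i j
        have hm' : ((ℓ : ℕ) : ℚ) * Q i j = (m : ℚ) := by exact_mod_cast hm
        refine ⟨(q : ℤ) * m, ?_⟩
        have h2 : (kq : ℚ) = ((q : ℕ) : ℚ) * ((ℓ : ℕ) : ℚ) := by rw [hkq]; push_cast; ring
        rw [h2, mul_assoc, hm']
        push_cast
        ring
      have hnatabs : ∀ i j, ∃ m : ℤ, ((c.natAbs : ℤ) : ℚ) * Q i j = (m : ℚ) := by
        intro i j
        obtain ⟨m, hm⟩ := hcmem i j
        rcases Int.natAbs_eq c with h | h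
        · exact ⟨m, by rw [← h]; exact hm⟩
        · refine ⟨-m, ?_⟩
          have h2 : ((c.natAbs : ℤ) : ℚ) = -(c : ℚ) := by
            have h3 : (c.natAbs : ℤ) = -c := by omega
            exact_mod_cast congrArg (fun z : ℤ => (z : ℚ)) h3
          rw [h2, neg_mul, hm]
          push_cast
          ring
      intro i j
      obtain ⟨m, hm⟩ := hmem _ hnatabs _ hℓmul i j
      refine ⟨m, ?_⟩
      rw [← hm]
      congr 1
      have h4 : ((c.natAbs : ℤ) - kq) = (r : ℤ) := by
        have h5 := Nat.mod_add_div c.natAbs ℓ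
        rw [hkq, hq, hr]
        omega
      exact_mod_cast congrArg (fun z : ℤ => (z : ℚ)) h4.symm
    have : ℓ ≤ r := hℓ.2 ⟨Nat.pos_of_ne_zero hrne, fun i j => hrint i j⟩
    omega
  have h6 : (ℓ : ℤ) ∣ (c.natAbs : ℤ) := Int.ofNat_dvd.mpr hdvdnat
  exact Int.dvd_natAbs.mp h6
end
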